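/- arXiv:1908.08324 — 2 statements merged into one kernel-verified Lean document; each statement's English description precedes it below -/
import Mathlib

section
/- Let H be a simply connected combinatorial strata structure endowed with a datum (N, {P_J}) of nodal strata, with nodal separating blocks enumerated B₁, …, B_n and maps Φ_m as defined. Then for every 0 ≤ m ≤ n, the 1-connected components of H(1) in H_m = H \ Cl_H(B₁ ∪ … ∪ B_m) are exactly the fibers Φ_m^{-1}(c) for c ∈ Δ_m. -/
/-- A combinatorial strata structure with minimal set of indices the (finite) type `I`:
an open subset of `𝒫(I)` (i.e. a family closed under taking subsets) containing all
singletons. -/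
def IsCSS {I : Type*} (H : Set (Finset I)) : Prop :=
  (∀ J ∈ H, ∀ J' : Finset I, J' ⊆ J → J' ∈ H) ∧ ∀ i : I, ({i} : Finset I) ∈ H

/-- `level H k` is `H(k)`, the set of strata of `H` with exactly `k` elements. -/
def level {I : Type*} (H : Set (Finset I)) (k : ℕ) : Set (Finset I) :=
  {J ∈ H | J.card = k}

/-- A `k`-path in `H`: a nonempty sequence of strata of `H(k)` such that the union of
any two consecutive entries lies in `H(k+1)`. -/
def IsKPath {I : Type*} [DecidableEq I] (H : Set (Finset I)) (k : ℕ)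
    (γ : List (Finset I)) : Prop :=
  γ ≠ [] ∧ (∀ J ∈ γ, J ∈ level H k) ∧
    γ.Chain' fun J J' => (J ∪ J') ∈ level H (k + 1)

/-- The path `γ` joins `J` and `J'`. -/
def Joins {I : Type*} (γ : List (Finset I)) (J J' : Finset I) : Prop :=
  γ.head? = some J ∧ γ.getLast? = some J'

/-- The subsupport of a path: the sequence of unions of consecutive entries. -/
def subSup {I : Type*} [DecidableEq I] (γ : List (Finset I)) : List (Finset I) :=
  List.zipWith (· ∪ ·) γ γ.tail

open Classical in
/-- `kappa B γ`: the number of entries of the subsupport of `γ` that belong to `B`. -/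
noncomputable def kappa {I : Type*} [DecidableEq I] (B : Set (Finset I))
    (γ : List (Finset I)) : ℕ :=
  (subSup γ).countP fun J => decide (J ∈ B)

/-- `A` is `k`-connected in `H`: any two elements of `A` are joined by a `k`-path in `H`
with support contained in `A`. -/
def KConnectedIn {I : Type*} [DecidableEq I] (H : Set (Finset I)) (k : ℕ)
    (A : Set (Finset I)) : Prop :=
  ∀ J ∈ A, ∀ J' ∈ A, ∃ γ : List (Finset I),
    IsKPath H k γ ∧ Joins γ J J' ∧ ∀ K ∈ γ, K ∈ A

/-- `C` is a `k`-connected component of `A` in `H`: a maximal nonempty `k`-connected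
subset of `A`. -/
def IsKComponent {I : Type*} [DecidableEq I] (H : Set (Finset I)) (k : ℕ)
    (A C : Set (Finset I)) : Prop :=
  C.Nonempty ∧ C ⊆ A ∧ KConnectedIn H k C ∧
    ∀ C' : Set (Finset I), C ⊆ C' → C' ⊆ A → KConnectedIn H k C' → C' = C

/-- `H` is 1-connected: `H(1)` is 1-connected in `H`. -/
def OneConnected {I : Type*} [DecidableEq I] (H : Set (Finset I)) : Prop :=
  KConnectedIn H 1 (level H 1)

/-- One-sided version of an elementary homotopic pair of 1-paths in `H`. -/
def ElemPairCore {I : Type*} [DecidableEq I] (H : Set (Finset I))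
    (ε ε' : List (Finset I)) : Prop :=
  ε = ε'
  ∨ (∃ i₁ i₂ : I, ε = [{i₁}, {i₂}, {i₁}] ∧ ε' = [{i₁}])
  ∨ (∃ i₁ i₂ i₃ : I, ε = [{i₁}, {i₂}] ∧ ε' = [{i₁}, {i₃}, {i₂}] ∧
      IsKPath H 2 [{i₁, i₃}, {i₃, i₂}])

/-- An elementary homotopic pair of 1-paths in `H` (up to swapping the two paths). -/
def ElemPair {I : Type*} [DecidableEq I] (H : Set (Finset I))
    (ε ε' : List (Finset I)) : Prop :=
  ElemPairCore H ε ε' ∨ ElemPairCore H ε' ε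

/-- `γ₂` is obtained from `γ₁` by an elementary homotopy. -/
def ElemHomotopy {I : Type*} [DecidableEq I] (H : Set (Finset I))
    (γ₁ γ₂ : List (Finset I)) : Prop :=
  ∃ δ ε₁ ε₂ ρ : List (Finset I),
    ElemPair H ε₁ ε₂ ∧ γ₁ = δ ++ ε₁ ++ ρ ∧ γ₂ = δ ++ ε₂ ++ ρ

/-- `γ` and `γ'` are homotopically equivalent in `H` with support in `A`: they are linked
by a finite chain of elementary homotopies in which every intermediate 1-path has
support in `A`. -/
def HomotopicIn {I : Type*} [DecidableEq I] (H A : Set (Finset I))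
    (γ γ' : List (Finset I)) : Prop :=
  (IsKPath H 1 γ ∧ ∀ J ∈ γ, J ∈ A) ∧
    Relation.ReflTransGen
      (fun g₁ g₂ => ElemHomotopy H g₁ g₂ ∧ IsKPath H 1 g₂ ∧ ∀ J ∈ g₂, J ∈ A) γ γ'

/-- A 1-connected subset `A ⊆ H(1)` is simply connected in `H`: any two 1-paths in `H`
with support in `A` joining the same strata are homotopically equivalent in `H` with
support in `A`. -/
def SimplyConnectedIn {I : Type*} [DecidableEq I] (H A : Set (Finset I)) : Prop :=
  KConnectedIn H 1 A ∧
    ∀ γ γ' : List (Finset I), IsKPath H 1 γ → IsKPath H 1 γ' →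
      (∀ J ∈ γ, J ∈ A) → (∀ J ∈ γ', J ∈ A) →
      γ.head? = γ'.head? → γ.getLast? = γ'.getLast? →
      HomotopicIn H A γ γ'

/-- `H` is simply connected: `H(1)` is simply connected in `H`. -/
def SimplyConnected {I : Type*} [DecidableEq I] (H : Set (Finset I)) : Prop :=
  SimplyConnectedIn H (level H 1)

/-- The closure of `A` in `H`: the strata of `H` containing some element of `A`. -/
def Cl {I : Type*} (H A : Set (Finset I)) : Set (Finset I) :=
  {J' ∈ H | ∃ J ∈ A, J ⊆ J'}

/-- A datum of nodal strata `(N, {P_J})` in `H`: a subset `N ⊆ H` together with, for each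
`J ∈ N`, a partition `P_J = {J₊, J₋}` of `J` into two nonempty parts, such that for every
`J ∈ N` and `J' ⊆ J` one has `J' ∈ N` iff `J' ∩ J₊ ≠ ∅ ≠ J' ∩ J₋`, and in that case
`P_{J'} = {J' ∩ J₊, J' ∩ J₋}`. -/
structure NodalDatum {I : Type*} [DecidableEq I] (H : Set (Finset I)) : Type _ where
  N : Set (Finset I)
  N_sub : N ⊆ H
  plus : Finset I → Finset I
  minus : Finset I → Finset I
  plus_nonempty : ∀ J ∈ N, (plus J).Nonempty
  minus_nonempty : ∀ J ∈ N, (minus J).Nonempty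
  union_eq : ∀ J ∈ N, plus J ∪ minus J = J
  disj : ∀ J ∈ N, Disjoint (plus J) (minus J)
  mem_iff : ∀ J ∈ N, ∀ J' : Finset I, J' ⊆ J →
    (J' ∈ N ↔ (J' ∩ plus J).Nonempty ∧ (J' ∩ minus J).Nonempty)
  part_eq : ∀ J ∈ N, ∀ J' : Finset I, J' ⊆ J → J' ∈ N →
    ({plus J', minus J'} : Set (Finset I)) = {J' ∩ plus J, J' ∩ minus J}

/-- `N*`: the set of uninterrupted nodal strata, i.e. `J ∈ N` with `Cl_H({J}) ⊆ N`. -/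
def Nstar {I : Type*} [DecidableEq I] {H : Set (Finset I)} (D : NodalDatum H) :
    Set (Finset I) :=
  {J ∈ D.N | ∀ J' ∈ H, J ⊆ J' → J' ∈ D.N}

/-- A nodal block of `N` in `H`: a 2-connected component of `N(2) = N ∩ H(2)` in `H`. -/
def IsNodalBlock {I : Type*} [DecidableEq I] {H : Set (Finset I)} (D : NodalDatum H)
    (B : Set (Finset I)) : Prop :=
  IsKComponent H 2 (D.N ∩ level H 2) B

/-- A nodal separating block: a nodal block contained in `N*`. -/
def IsSepBlock {I : Type*} [DecidableEq I] {H : Set (Finset I)} (D : NodalDatum H)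
    (B : Set (Finset I)) : Prop :=
  IsNodalBlock D B ∧ B ⊆ Nstar D

/-- The separator set: the union of all nodal separating blocks. -/
def SepSet {I : Type*} [DecidableEq I] {H : Set (Finset I)} (D : NodalDatum H) :
    Set (Finset I) :=
  ⋃₀ {B | IsSepBlock D B}

/-- `A_B(i)`: the set of `{j} ∈ H(1)` joined to `{i}` by a 1-path `γ` in `H` with
`κ_B(γ)` even. -/
def ABset {I : Type*} [DecidableEq I] (H B : Set (Finset I)) (i : I) : Set (Finset I) :=
  {J ∈ level H 1 | ∃ γ : List (Finset I),
    IsKPath H 1 γ ∧ Joins γ {i} J ∧ Even (kappa B γ)}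

/-- `B_B(i)`: the set of `{j} ∈ H(1)` joined to `{i}` by a 1-path `γ` in `H` with
`κ_B(γ)` odd. -/
def BBset {I : Type*} [DecidableEq I] (H B : Set (Finset I)) (i : I) : Set (Finset I) :=
  {J ∈ level H 1 | ∃ γ : List (Finset I),
    IsKPath H 1 γ ∧ Joins γ {i} J ∧ Odd (kappa B γ)}

open Classical in
/-- `Φ_m` for the enumeration `B` of the nodal separating blocks and base point `i₀`,
evaluated on the singleton stratum `{i}` (identified with `i`):
`Φ_m({i})(ℓ) = 0` if `{i} ∈ A_{B_ℓ}(i₀)` and `Φ_m({i})(ℓ) = 1` (`true`) if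
`{i} ∈ B_{B_ℓ}(i₀)`. -/
noncomputable def PhiM {I : Type*} [DecidableEq I] {n : ℕ} (H : Set (Finset I)) (i₀ : I)
    (B : Fin n → Set (Finset I)) (m : ℕ) (hm : m ≤ n) (i : I) : Fin m → Bool :=
  fun ℓ => decide (({i} : Finset I) ∈ BBset H (B (Fin.castLE hm ℓ)) i₀)

/-!
Paths become walks in the `k`-skeleton graph of `H`, and `κ_B` counts the steps of a walk
across `B`.

If `B` is a nodal separating block, every triangle of `H` has an even number of edges in `B`:
a triangle with an edge in `B` is nodal, its partition singles out an apex, its nodal edges are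
the two through the apex, and these lie in the same block. Hence the parity of `κ_B` is
invariant under elementary homotopies and, `H` being simply connected, depends only on the
endpoints of the walk. In particular `Φ_m` is constant along walks in `H_m`, which cross none
of `B₁, …, B_m`.

Conversely, suppose a walk crosses every `B_ℓ` an even number of times. Follow it to its first
crossing, of `B_ℓ` say, and on to the next crossing of `B_ℓ`. Moving through the 2-connected
block from the first crossing edge to the second gives a detour that avoids `N` and ends at an
endpoint of the second edge; by parity it is the far endpoint, so the detour shortcuts the walk
with fewer crossings. By induction the endpoints are joined in `H_m`.
-/

section

open SimpleGraph

variable {I : Type*}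

lemma level_one_eq_range {H : Set (Finset I)} (hsing : ∀ i : I, ({i} : Finset I) ∈ H) :
    level H 1 = Set.range fun i : I => ({i} : Finset I) := by
  ext J
  simp only [level, Set.mem_ofPred_eq, Set.mem_range, Finset.card_eq_one, eq_comm (a := J)]
  exact ⟨fun h => h.2, fun ⟨i, hi⟩ => ⟨hi ▸ hsing i, i, hi⟩⟩

variable [DecidableEq I]

/-- The `k`-skeleton of `H`; its walks are exactly the `k`-paths in `H`. -/
def skeleton (H : Set (Finset I)) (k : ℕ) : SimpleGraph (Finset I) where
  Adj J K := J ∈ level H k ∧ K ∈ level H k ∧ J ∪ K ∈ level H (k + 1)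
  symm := ⟨fun J K h => ⟨h.2.1, h.1, Finset.union_comm K J ▸ h.2.2⟩⟩
  loopless := ⟨fun J h => by have := h.2.2.2; rw [Finset.union_self, h.1.2] at this; omega⟩

section Skeleton

variable {H : Set (Finset I)} {k : ℕ}

lemma skeleton_adj {J K : Finset I} :
    (skeleton H k).Adj J K ↔ J ∈ level H k ∧ K ∈ level H k ∧ J ∪ K ∈ level H (k + 1) :=
  Iff.rfl

lemma SimpleGraph.Walk.support_subset_level {J K : Finset I} (hJ : J ∈ level H k)
    (w : (skeleton H k).Walk J K) : ∀ L ∈ w.support, L ∈ level H k := by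
  induction w with
  | nil => simpa using hJ
  | cons hadj _ ih => simpa [hJ] using ih (skeleton_adj.1 hadj).2.1

lemma SimpleGraph.Walk.isKPath_support {J K : Finset I} (hJ : J ∈ level H k)
    (w : (skeleton H k).Walk J K) : IsKPath H k w.support :=
  ⟨w.support_ne_nil, Walk.support_subset_level hJ w,
    w.isChain_adj_support.imp fun _ _ h => (skeleton_adj.1 h).2.2⟩

lemma SimpleGraph.Walk.joins_support {J K : Finset I} (w : (skeleton H k).Walk J K) :
    Joins w.support J K := by
  refine ⟨?_, by rw [List.getLast?_eq_some_getLast w.support_ne_nil, w.getLast_support]⟩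
  cases w <;> rfl

lemma exists_walk_of_isKPath {γ : List (Finset I)} (hγ : IsKPath H k γ) :
    ∀ {J K : Finset I}, Joins γ J K → ∃ w : (skeleton H k).Walk J K, w.support = γ := by
  obtain ⟨hne, hlevel, hchain⟩ := hγ
  induction γ with
  | nil => exact absurd rfl hne
  | cons L γ ih =>
    rintro J K ⟨hhead, hlast⟩
    obtain rfl : L = J := by simpa using hhead
    cases γ with
    | nil =>
      obtain rfl : L = K := by simpa using hlast
      exact ⟨.nil, rfl⟩
    | cons L' γ =>
      rw [List.Chain', List.isChain_cons_cons] at hchain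
      obtain ⟨w, hw⟩ := ih (List.cons_ne_nil _ _)
        (fun M hM => hlevel M (List.mem_cons_of_mem _ hM)) hchain.2
        (J := L') ⟨rfl, by rwa [List.getLast?_cons_cons] at hlast⟩
      have hadj : (skeleton H k).Adj L L' := skeleton_adj.2
        ⟨hlevel L (by simp), hlevel L' (by simp), hchain.1⟩
      exact ⟨.cons hadj w, by rw [Walk.support_cons, hw]⟩

lemma KConnectedIn.subset_level {A : Set (Finset I)} (hA : KConnectedIn H k A) :
    A ⊆ level H k := fun J hJ => by
  obtain ⟨γ, hγ, ⟨hhead, -⟩, -⟩ := hA J hJ J hJ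
  exact hγ.2.1 J (List.mem_of_mem_head? hhead)

lemma KConnectedIn.exists_walk {A : Set (Finset I)} (hA : KConnectedIn H k A)
    {J K : Finset I} (hJ : J ∈ A) (hK : K ∈ A) :
    ∃ w : (skeleton H k).Walk J K, ∀ L ∈ w.support, L ∈ A := by
  obtain ⟨γ, hγ, hjoin, hγA⟩ := hA J hJ K hK
  obtain ⟨w, rfl⟩ := exists_walk_of_isKPath hγ hjoin
  exact ⟨w, hγA⟩

lemma kConnectedIn_of_exists_walk {A : Set (Finset I)} (hA : A ⊆ level H k)
    (h : ∀ J ∈ A, ∀ K ∈ A, ∃ w : (skeleton H k).Walk J K, ∀ L ∈ w.support, L ∈ A) :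
    KConnectedIn H k A := fun J hJ K hK => by
  obtain ⟨w, hw⟩ := h J hJ K hK
  exact ⟨w.support, Walk.isKPath_support (hA hJ) w, Walk.joins_support w, hw⟩

lemma IsKComponent.mem_of_adj {A C : Set (Finset I)} (hC : IsKComponent H k A C)
    {J K : Finset I} (hJ : J ∈ C) (hK : K ∈ A) (hadj : (skeleton H k).Adj J K) : K ∈ C := by
  obtain ⟨-, hCA, hconn, hmax⟩ := hC
  have hlevel : insert K C ⊆ level H k :=
    Set.insert_subset (skeleton_adj.1 hadj).2.1 hconn.subset_level
  have to_K : ∀ L ∈ insert K C,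
      ∃ w : (skeleton H k).Walk L K, ∀ M ∈ w.support, M ∈ insert K C := by
    rintro L (rfl | hL)
    · exact ⟨.nil, by simp⟩
    · obtain ⟨w, hw⟩ := hconn.exists_walk hL hJ
      refine ⟨w.concat hadj, fun M hM => ?_⟩
      rw [Walk.support_concat, List.mem_append, List.mem_singleton] at hM
      exact hM.elim (fun h => Or.inr (hw M h)) Or.inl
  have hconn' : KConnectedIn H k (insert K C) := by
    refine kConnectedIn_of_exists_walk hlevel fun L hL M hM => ?_
    obtain ⟨w, hw⟩ := to_K L hL
    obtain ⟨w', hw'⟩ := to_K M hM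
    refine ⟨w.append w'.reverse, fun N hN => ?_⟩
    rw [Walk.mem_support_append_iff, Walk.support_reverse, List.mem_reverse] at hN
    exact hN.elim (hw N) (hw' N)
  rw [← hmax _ (Set.subset_insert _ _) (Set.insert_subset hK hCA) hconn']
  exact Set.mem_insert _ _

end Skeleton

section Crossings

variable {G : SimpleGraph (Finset I)} {B : Set (Finset I)}

open Classical in
/-- `κ_B` of the path `w.support`, see `kappa_support`. -/
noncomputable def crossings (B : Set (Finset I)) {J K : Finset I} (w : G.Walk J K) : ℕ :=
  w.darts.countP fun d => d.fst ∪ d.snd ∈ B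

@[simp]
lemma crossings_nil {J : Finset I} : crossings B (Walk.nil : G.Walk J J) = 0 := rfl

lemma crossings_cons_of_mem {J K L : Finset I} (h : G.Adj J K) (w : G.Walk K L)
    (hJK : J ∪ K ∈ B) : crossings B (Walk.cons h w) = crossings B w + 1 := by
  simp [crossings, hJK]

lemma crossings_cons_of_not_mem {J K L : Finset I} (h : G.Adj J K) (w : G.Walk K L)
    (hJK : J ∪ K ∉ B) : crossings B (Walk.cons h w) = crossings B w := by
  simp [crossings, hJK]

@[simp]
lemma crossings_append {J K L : Finset I} (w : G.Walk J K) (w' : G.Walk K L) :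
    crossings B (w.append w') = crossings B w + crossings B w' := by
  simp [crossings, Walk.darts_append, List.countP_append]

@[simp]
lemma crossings_reverse {J K : Finset I} (w : G.Walk J K) :
    crossings B w.reverse = crossings B w := by
  simp only [crossings, Walk.darts_reverse, List.countP_reverse, List.countP_map]
  congr 1
  ext d
  simp [Finset.union_comm]

lemma crossings_mono {B' : Set (Finset I)} (hB : B ⊆ B') {J K : Finset I} (w : G.Walk J K) :
    crossings B w ≤ crossings B' w :=
  List.countP_mono_left fun d _ h => by simpa using hB (by simpa using h)

lemma crossings_eq_zero_of_subset {B' : Set (Finset I)} (hB : B ⊆ B') {J K : Finset I}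
    {w : G.Walk J K} (hw : crossings B' w = 0) : crossings B w = 0 :=
  Nat.le_zero.1 (hw ▸ crossings_mono hB w)

lemma subSup_support {J K : Finset I} (w : G.Walk J K) :
    subSup w.support = w.darts.map fun d => d.fst ∪ d.snd := by
  induction w with
  | nil => rfl
  | cons _ w ih =>
    rw [Walk.support_cons, Walk.darts_cons, List.map_cons, ← ih, ← w.cons_tail_support]
    rfl

lemma kappa_support {J K : Finset I} (w : G.Walk J K) :
    kappa B w.support = crossings B w := by
  rw [kappa, subSup_support, List.countP_map]
  rfl

lemma SimpleGraph.Walk.exists_first_crossing {J K : Finset I} (w : G.Walk J K)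
    (hw : crossings B w ≠ 0) :
    ∃ (L L' : Finset I) (h : G.Adj L L') (w₁ : G.Walk J L) (w₂ : G.Walk L' K),
      L ∪ L' ∈ B ∧ crossings B w₁ = 0 ∧ w = w₁.append (Walk.cons h w₂) := by
  induction w with
  | nil => exact absurd rfl hw
  | @cons J J' K h w ih =>
    by_cases hJ : J ∪ J' ∈ B
    · exact ⟨J, J', h, .nil, w, hJ, rfl, rfl⟩
    · rw [crossings_cons_of_not_mem h w hJ] at hw
      obtain ⟨L, L', h', w₁, w₂, hL, hw₁, rfl⟩ := ih hw
      exact ⟨L, L', h', .cons h w₁, w₂, hL, by rwa [crossings_cons_of_not_mem h w₁ hJ], rfl⟩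

end Crossings

section Removal

variable {H S : Set (Finset I)} {k : ℕ}

omit [DecidableEq I] in
lemma mem_sdiff_cl_iff {J : Finset I} (hS : ∀ L ∈ S, J.card ≤ L.card) :
    J ∈ H \ Cl H S ↔ J ∈ H ∧ J ∉ S := by
  refine and_congr_right fun hJ => not_congr ⟨?_, fun h => ⟨hJ, J, h, subset_rfl⟩⟩
  rintro ⟨-, L, hL, hLJ⟩
  rwa [Finset.eq_of_subset_of_card_le hLJ (hS L hL)] at hL

omit [DecidableEq I] in
lemma singleton_mem_sdiff_cl {i : I} (hi : {i} ∈ H) (hS : ∀ L ∈ S, 1 < L.card) :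
    {i} ∈ H \ Cl H S :=
  (mem_sdiff_cl_iff fun L hL => (Finset.card_singleton i).trans_le (hS L hL).le).2
    ⟨hi, fun h => (hS _ h).ne' (Finset.card_singleton i)⟩

lemma skeleton_sdiff_cl_adj (hS : ∀ L ∈ S, L.card = k + 1) {J K : Finset I} :
    (skeleton (H \ Cl H S) k).Adj J K ↔ (skeleton H k).Adj J K ∧ J ∪ K ∉ S := by
  have hlevel : ∀ {L : Finset I} {n : ℕ}, n ≤ k + 1 →
      (L ∈ level (H \ Cl H S) n ↔ L ∈ level H n ∧ L ∉ S) := by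
    rintro L n hn
    simp only [level, Set.mem_ofPred_eq]
    constructor
    · rintro ⟨hL, rfl⟩
      exact ⟨⟨hL.1, rfl⟩, ((mem_sdiff_cl_iff fun M hM => hn.trans (hS M hM).ge).1 hL).2⟩
    · rintro ⟨⟨hL, rfl⟩, hLS⟩
      exact ⟨(mem_sdiff_cl_iff fun M hM => hn.trans (hS M hM).ge).2 ⟨hL, hLS⟩, rfl⟩
  have hk : ∀ {L : Finset I}, L ∈ level H k → L ∉ S := fun hL hLS => by
    have := hS _ hLS
    rw [hL.2] at this
    omega
  simp only [skeleton_adj, hlevel (Nat.le_succ k), hlevel le_rfl]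
  constructor
  · rintro ⟨⟨hJ, -⟩, ⟨hK, -⟩, hJK⟩
    exact ⟨⟨hJ, hK, hJK.1⟩, hJK.2⟩
  · rintro ⟨⟨hJ, hK, hJK⟩, hJKS⟩
    exact ⟨⟨hJ, hk hJ⟩, ⟨hK, hk hK⟩, hJK, hJKS⟩

lemma reachable_sdiff_cl_iff (hS : ∀ L ∈ S, L.card = k + 1) {J K : Finset I} :
    (skeleton (H \ Cl H S) k).Reachable J K ↔
      ∃ w : (skeleton H k).Walk J K, crossings S w = 0 := by
  constructor
  · rintro ⟨w⟩
    induction w with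
    | nil => exact ⟨.nil, rfl⟩
    | cons h _ ih =>
      obtain ⟨hadj, hS'⟩ := (skeleton_sdiff_cl_adj hS).1 h
      obtain ⟨w, hw⟩ := ih
      exact ⟨.cons hadj w, by rwa [crossings_cons_of_not_mem hadj w hS']⟩
  · rintro ⟨w, hw⟩
    induction w with
    | nil => rfl
    | @cons J J' K h w ih =>
      by_cases hJK : J ∪ J' ∈ S
      · simp [crossings_cons_of_mem h w hJK] at hw
      rw [crossings_cons_of_not_mem h w hJK] at hw
      exact ((skeleton_sdiff_cl_adj hS).2 ⟨h, hJK⟩).reachable.trans (ih hw)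

end Removal

theorem isKComponent_one_iff_fiber {H : Set (Finset I)} (hsing : ∀ i : I, ({i} : Finset I) ∈ H)
    {β : Type*} (g : I → β) (hg : ∀ i j, (skeleton H 1).Reachable {i} {j} ↔ g i = g j)
    (C : Set (Finset I)) :
    IsKComponent H 1 (Set.range fun i : I => ({i} : Finset I)) C ↔
      ∃ c ∈ Set.range g, C = {J : Finset I | ∃ i : I, J = ({i} : Finset I) ∧ g i = c} := by
  set fiber : β → Set (Finset I) := fun c => {J | ∃ i : I, J = ({i} : Finset I) ∧ g i = c}
  have hfiber_sub : ∀ c, fiber c ⊆ Set.range fun i : I => ({i} : Finset I) := by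
    rintro c _ ⟨i, rfl, -⟩
    exact ⟨i, rfl⟩
  have hconn : ∀ c, KConnectedIn H 1 (fiber c) := by
    refine fun c => kConnectedIn_of_exists_walk
      ((hfiber_sub c).trans (level_one_eq_range hsing).ge) ?_
    rintro _ ⟨i, rfl, rfl⟩ _ ⟨j, rfl, hj⟩
    obtain ⟨w⟩ := (hg i j).2 hj.symm
    refine ⟨w, fun L hL => ?_⟩
    obtain ⟨l, rfl⟩ := Finset.card_eq_one.1
      (w.support_subset_level ⟨hsing i, Finset.card_singleton i⟩ L hL).2
    exact ⟨l, rfl, ((hg i l).1 ⟨w.takeUntil _ hL⟩).symm⟩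
  have hsub_fiber : ∀ i C', {i} ∈ C' → KConnectedIn H 1 C' →
      C' ⊆ (Set.range fun i : I => ({i} : Finset I)) → C' ⊆ fiber (g i) := by
    intro i C' hi hC' hC'sub J hJ
    obtain ⟨j, rfl⟩ := hC'sub hJ
    obtain ⟨w, -⟩ := hC'.exists_walk hi hJ
    exact ⟨j, rfl, ((hg i j).1 ⟨w⟩).symm⟩
  constructor
  · rintro ⟨⟨J, hJ⟩, hCsub, hC, hCmax⟩
    obtain ⟨i, rfl⟩ := hCsub hJ
    exact ⟨g i, ⟨i, rfl⟩,
      (hCmax _ (hsub_fiber i C hJ hC hCsub) (hfiber_sub _) (hconn _)).symm⟩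
  · rintro ⟨_, ⟨i, rfl⟩, rfl⟩
    exact ⟨⟨{i}, i, rfl, rfl⟩, hfiber_sub _, hconn _, fun C' hsub hC'sub hC' =>
      (hsub_fiber i C' (hsub ⟨i, rfl, rfl⟩) hC' hC'sub).antisymm hsub⟩

section Nodal

variable {H : Set (Finset I)}

lemma nonempty_inter_and_nonempty_inter_iff {T P Q e : Finset I} {p : I} (hPQ : P ∪ Q = T)
    (hP : P = {p}) (heT : e ⊆ T) (he : e.card = 2) :
    ((e ∩ P).Nonempty ∧ (e ∩ Q).Nonempty) ↔ p ∈ e := by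
  subst hP
  refine ⟨fun ⟨⟨x, hx⟩, _⟩ => ?_, fun hp => ⟨⟨p, by simp [hp]⟩, ?_⟩⟩
  · rw [Finset.mem_inter, Finset.mem_singleton] at hx
    exact hx.2 ▸ hx.1
  obtain ⟨x, hx, hxp⟩ := Finset.exists_mem_ne (by omega : 1 < e.card) p
  have hxT := heT hx
  rw [← hPQ, Finset.mem_union, Finset.mem_singleton] at hxT
  exact ⟨x, Finset.mem_inter.2 ⟨hx, hxT.resolve_left hxp⟩⟩

lemma NodalDatum.exists_apex (D : NodalDatum H) {T : Finset I} (hT : T ∈ D.N)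
    (hT3 : T.card = 3) : ∃ p ∈ T, ∀ e ⊆ T, e.card = 2 → (e ∈ D.N ↔ p ∈ e) := by
  have hcard := Finset.card_union_of_disjoint (D.disj T hT)
  rw [D.union_eq T hT, hT3] at hcard
  have hplus := (D.plus_nonempty T hT).card_pos
  have hminus := (D.minus_nonempty T hT).card_pos
  obtain hP | hQ : (D.plus T).card = 1 ∨ (D.minus T).card = 1 := by omega
  · obtain ⟨p, hp⟩ := Finset.card_eq_one.1 hP
    refine ⟨p, D.union_eq T hT ▸ Finset.mem_union_left _ (hp ▸ Finset.mem_singleton_self p),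
      fun e heT he => ?_⟩
    rw [D.mem_iff T hT e heT]
    exact nonempty_inter_and_nonempty_inter_iff (D.union_eq T hT) hp heT he
  · obtain ⟨p, hp⟩ := Finset.card_eq_one.1 hQ
    refine ⟨p, D.union_eq T hT ▸ Finset.mem_union_right _ (hp ▸ Finset.mem_singleton_self p),
      fun e heT he => ?_⟩
    rw [D.mem_iff T hT e heT, and_comm]
    exact nonempty_inter_and_nonempty_inter_iff (by rw [Finset.union_comm, D.union_eq T hT]) hp
      heT he

variable {D : NodalDatum H} {B : Set (Finset I)}

lemma IsSepBlock.exists_apex (hH : IsCSS H) (hB : IsSepBlock D B) {T e₀ : Finset I}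
    (hT : T ∈ level H 3) (he₀ : e₀ ∈ B) (he₀T : e₀ ⊆ T) :
    ∃ p ∈ T, ∀ e ⊆ T, e.card = 2 → (e ∈ B ↔ p ∈ e) := by
  have hBA := hB.1.2.1
  obtain ⟨p, hpT, hp⟩ := D.exists_apex ((hB.2 he₀).2 T hT.1 he₀T) hT.2
  refine ⟨p, hpT, fun e heT he => ⟨fun heB => (hp e heT he).1 (hBA heB).1, fun hpe => ?_⟩⟩
  by_cases hee₀ : e = e₀
  · exact hee₀ ▸ he₀
  have he₀2 : e₀.card = 2 := (hBA he₀).2.2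
  have hunion : e₀ ∪ e = T := by
    refine Finset.eq_of_subset_of_card_le (Finset.union_subset he₀T heT) ?_
    by_contra! h
    have := hT.2
    have h₀ : e₀ ∪ e = e₀ :=
      (Finset.eq_of_subset_of_card_le Finset.subset_union_left (by omega)).symm
    exact hee₀ (Finset.eq_of_subset_of_card_le (h₀ ▸ Finset.subset_union_right) (by omega))
  have he : e ∈ level H 2 := ⟨hH.1 T hT.1 e heT, he⟩
  exact hB.1.mem_of_adj he₀ ⟨(hp e heT he.2).2 hpe, he⟩
    (skeleton_adj.2 ⟨(hBA he₀).2, he, hunion ▸ hT⟩)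

lemma IsSepBlock.kappa_triangle_mod_two (hH : IsCSS H) (hB : IsSepBlock D B) {i₁ i₂ i₃ : I}
    (h : IsKPath H 2 [{i₁, i₃}, {i₃, i₂}]) :
    kappa B [{i₁}, {i₂}] % 2 = kappa B [{i₁}, {i₃}, {i₂}] % 2 := by
  obtain ⟨-, hmem, hchain⟩ := h
  have h₁₃ : ({i₁, i₃} : Finset I) ∈ level H 2 := hmem _ (by simp)
  have h₃₂ : ({i₃, i₂} : Finset I) ∈ level H 2 := hmem _ (by simp)
  have hT : ({i₁, i₃} ∪ {i₃, i₂} : Finset I) ∈ level H 3 := by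
    rwa [List.Chain', List.isChain_pair] at hchain
  have hne₁₃ : i₁ ≠ i₃ := by rintro rfl; simpa using h₁₃.2
  have hne₃₂ : i₃ ≠ i₂ := by rintro rfl; simpa using h₃₂.2
  have hne₁₂ : i₁ ≠ i₂ := by
    rintro rfl
    have := hT.2
    rw [Finset.pair_comm i₃ i₁, Finset.union_self, Finset.card_pair hne₁₃] at this
    omega
  have hsub : ∀ {a b : I}, a ∈ ({i₁, i₃} ∪ {i₃, i₂} : Finset I) →
      b ∈ ({i₁, i₃} ∪ {i₃, i₂} : Finset I) →
      ({a, b} : Finset I) ⊆ {i₁, i₃} ∪ {i₃, i₂} :=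
    fun ha hb => Finset.insert_subset ha (Finset.singleton_subset_iff.2 hb)
  simp only [kappa, subSup, List.tail_cons, List.zipWith_cons_cons, List.zipWith_nil_right,
    List.countP_cons, List.countP_nil, ← Finset.insert_eq]
  by_cases hex : {i₁, i₂} ∈ B ∨ {i₁, i₃} ∈ B ∨ {i₃, i₂} ∈ B
  · obtain ⟨e₀, he₀, he₀T⟩ : ∃ e₀ ∈ B, e₀ ⊆ {i₁, i₃} ∪ {i₃, i₂} := by
      rcases hex with h | h | h <;> exact ⟨_, h, hsub (by simp) (by simp)⟩
    obtain ⟨p, hpT, hp⟩ := hB.exists_apex hH hT he₀ he₀T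
    rw [hp _ (hsub (by simp) (by simp)) (Finset.card_pair hne₁₂),
      hp _ (hsub (by simp) (by simp)) (Finset.card_pair hne₁₃),
      hp _ (hsub (by simp) (by simp)) (Finset.card_pair hne₃₂)]
    simp only [Finset.mem_union, Finset.mem_insert, Finset.mem_singleton] at hpT
    rcases hpT with (rfl | rfl) | (rfl | rfl) <;>
      simp [hne₁₂, hne₁₃, hne₃₂, hne₁₂.symm, hne₁₃.symm, hne₃₂.symm]
  · simp only [not_or] at hex
    simp [hex]

end Nodal

section Parity

variable {H : Set (Finset I)} {D : NodalDatum H} {B : Set (Finset I)}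

lemma subSup_append (α β : List (Finset I)) :
    subSup (α ++ β) =
      subSup α ++ List.zipWith (· ∪ ·) α.getLast?.toList β.head?.toList ++ subSup β := by
  induction α with
  | nil => simp [subSup]
  | cons a α ih =>
    cases α with
    | nil => cases β <;> simp [subSup]
    | cons a' α => simpa [subSup] using ih

lemma kappa_append_append_mod_two {δ ε ε' ρ : List (Finset I)} (hhead : ε.head? = ε'.head?)
    (hlast : ε.getLast? = ε'.getLast?) (hκ : kappa B ε % 2 = kappa B ε' % 2) :
    kappa B (δ ++ ε ++ ρ) % 2 = kappa B (δ ++ ε' ++ ρ) % 2 := by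
  simp only [kappa] at hκ ⊢
  rw [List.append_assoc, List.append_assoc, subSup_append δ, subSup_append δ, subSup_append ε,
    subSup_append ε', List.head?_append, List.head?_append, hhead, hlast]
  simp only [List.countP_append]
  omega

lemma IsSepBlock.kappa_mod_two_eq_of_elemHomotopy (hH : IsCSS H) (hB : IsSepBlock D B)
    {γ γ' : List (Finset I)} (h : ElemHomotopy H γ γ') : kappa B γ % 2 = kappa B γ' % 2 := by
  obtain ⟨δ, ε, ε', ρ, hpair, rfl, rfl⟩ := h
  suffices key : ∀ ε ε', ElemPairCore H ε ε' →
      kappa B (δ ++ ε ++ ρ) % 2 = kappa B (δ ++ ε' ++ ρ) % 2 from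
    hpair.elim (key _ _) fun h => (key _ _ h).symm
  rintro ε ε' (rfl | ⟨i₁, i₂, rfl, rfl⟩ | ⟨i₁, i₂, i₃, rfl, rfl, htri⟩)
  · rfl
  · refine kappa_append_append_mod_two rfl rfl ?_
    simp only [kappa, subSup, List.tail_cons, List.zipWith_cons_cons, List.zipWith_nil_right,
      List.countP_cons, List.countP_nil, Finset.union_comm {i₂}]
    split <;> rfl
  · exact kappa_append_append_mod_two rfl rfl (hB.kappa_triangle_mod_two hH htri)

lemma IsSepBlock.kappa_mod_two_eq_of_homotopicIn (hH : IsCSS H) (hB : IsSepBlock D B)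
    {A : Set (Finset I)} {γ γ' : List (Finset I)} (h : HomotopicIn H A γ γ') :
    kappa B γ % 2 = kappa B γ' % 2 := by
  obtain ⟨-, hsteps⟩ := h
  induction hsteps with
  | refl => rfl
  | tail _ hstep ih => exact ih.trans (hB.kappa_mod_two_eq_of_elemHomotopy hH hstep.1)

lemma IsSepBlock.crossings_mod_two_eq (hH : IsCSS H) (hsc : SimplyConnected H)
    (hB : IsSepBlock D B) {J K : Finset I} (hJ : J ∈ level H 1)
    (w w' : (skeleton H 1).Walk J K) : crossings B w % 2 = crossings B w' % 2 := by
  have hw := w.isKPath_support hJ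
  have hw' := w'.isKPath_support hJ
  rw [← kappa_support, ← kappa_support]
  exact hB.kappa_mod_two_eq_of_homotopicIn hH (hsc.2 _ _ hw hw' hw.2.1 hw'.2.1
    (by rw [w.joins_support.1, w'.joins_support.1]) (by rw [w.joins_support.2, w'.joins_support.2]))

lemma IsSepBlock.mem_BBset_iff (hH : IsCSS H) (hsc : SimplyConnected H) (hB : IsSepBlock D B)
    {i₀ i : I} (w : (skeleton H 1).Walk {i₀} {i}) :
    {i} ∈ BBset H B i₀ ↔ Odd (crossings B w) := by
  have h₀ : {i₀} ∈ level H 1 := ⟨hH.2 i₀, Finset.card_singleton i₀⟩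
  constructor
  · rintro ⟨-, γ, hγ, hjoin, hodd⟩
    obtain ⟨w', rfl⟩ := exists_walk_of_isKPath hγ hjoin
    rw [kappa_support, Nat.odd_iff] at hodd
    rw [Nat.odd_iff, hB.crossings_mod_two_eq hH hsc h₀ w w', hodd]
  · exact fun hodd => ⟨⟨hH.2 i, Finset.card_singleton i⟩, w.support, w.isKPath_support h₀,
      w.joins_support, by rwa [kappa_support]⟩

end Parity

section Blocks

variable {H : Set (Finset I)} {D : NodalDatum H} {B : Set (Finset I)}

lemma IsSepBlock.exists_avoiding_step (hH : IsCSS H) (hB : IsSepBlock D B) {e f : Finset I}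
    (he : e ∈ B) (hf : f ∈ B) (hadj : (skeleton H 2).Adj e f) {V : Finset I}
    (hV : V ∈ level H 1) (hVe : V ⊆ e) :
    ∃ U ∈ level H 1, U ⊆ f ∧ ∃ p : (skeleton H 1).Walk V U, crossings D.N p = 0 := by
  obtain ⟨v, rfl⟩ := Finset.card_eq_one.1 hV.2
  rw [Finset.singleton_subset_iff] at hVe
  by_cases hvf : v ∈ f
  · exact ⟨{v}, hV, Finset.singleton_subset_iff.2 hvf, .nil, rfl⟩
  have hf2 := (hB.1.2.1 hf).2.2
  obtain ⟨-, -, hT⟩ := skeleton_adj.1 hadj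
  obtain ⟨p, -, hp⟩ := D.exists_apex ((hB.2 he).2 _ hT.1 Finset.subset_union_left) hT.2
  have hpf : p ∈ f := (hp f Finset.subset_union_right hf2).1 (hB.1.2.1 hf).1
  obtain ⟨z, hzf, hzp⟩ := Finset.exists_mem_ne (by omega : 1 < f.card) p
  have hsub : {v} ∪ {z} ⊆ e ∪ f := Finset.union_subset
    (Finset.singleton_subset_iff.2 (Finset.mem_union_left _ hVe))
    (Finset.singleton_subset_iff.2 (Finset.mem_union_right _ hzf))
  have hvz : ({v} ∪ {z} : Finset I).card = 2 := by
    rw [← Finset.insert_eq]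
    exact Finset.card_pair fun h => hvf (h ▸ hzf)
  have hz : {z} ∈ level H 1 := ⟨hH.2 z, Finset.card_singleton z⟩
  have hadj' : (skeleton H 1).Adj {v} {z} := skeleton_adj.2 ⟨hV, hz, hH.1 _ hT.1 _ hsub, hvz⟩
  refine ⟨{z}, hz, Finset.singleton_subset_iff.2 hzf, .cons hadj' .nil, ?_⟩
  rw [crossings_cons_of_not_mem _ _ ?_, crossings_nil]
  rw [hp _ hsub hvz, Finset.mem_union, Finset.mem_singleton, Finset.mem_singleton]
  rintro (rfl | rfl)
  exacts [hvf hpf, hzp rfl]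

lemma IsSepBlock.exists_avoiding_walk (hH : IsCSS H) (hB : IsSepBlock D B) {e e' : Finset I}
    (w : (skeleton H 2).Walk e e') (hw : ∀ f ∈ w.support, f ∈ B) {V : Finset I}
    (hV : V ∈ level H 1) (hVe : V ⊆ e) :
    ∃ U ∈ level H 1, U ⊆ e' ∧ ∃ p : (skeleton H 1).Walk V U, crossings D.N p = 0 := by
  induction w generalizing V with
  | nil => exact ⟨V, hV, hVe, .nil, rfl⟩
  | cons hadj w ih =>
    rw [Walk.support_cons] at hw
    obtain ⟨U, hU, hUf, p, hp⟩ := hB.exists_avoiding_step hH (hw _ List.mem_cons_self)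
      (hw _ (List.mem_cons_of_mem _ w.start_mem_support)) hadj hV hVe
    obtain ⟨U', hU', hU'e', p', hp'⟩ := ih (fun f hf => hw f (List.mem_cons_of_mem _ hf)) hU hUf
    exact ⟨U', hU', hU'e', p.append p', by rw [crossings_append, hp, hp']⟩

end Blocks

lemma eq_or_eq_of_subset_union_of_card_eq_one {U A A' : Finset I}
    (hU : U.card = 1) (hA : A.card = 1) (hA' : A'.card = 1) (h : U ⊆ A ∪ A') :
    U = A ∨ U = A' := by
  obtain ⟨u, rfl⟩ := Finset.card_eq_one.1 hU
  obtain ⟨a, rfl⟩ := Finset.card_eq_one.1 hA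
  obtain ⟨a', rfl⟩ := Finset.card_eq_one.1 hA'
  simp only [Finset.singleton_subset_iff, Finset.mem_union, Finset.mem_singleton] at h
  rcases h with rfl | rfl <;> simp

section Reduction

variable {H : Set (Finset I)} {D : NodalDatum H} {ι : Type*} {Bs : ι → Set (Finset I)}

lemma card_eq_two_of_mem_iUnion (hB : ∀ ℓ, IsSepBlock D (Bs ℓ)) :
    ∀ L ∈ ⋃ ℓ, Bs ℓ, L.card = 2 := by
  simp only [Set.mem_iUnion]
  rintro L ⟨ℓ, hL⟩
  exact ((hB ℓ).1.2.1 hL).2.2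

lemma exists_walk_crossings_lt (hH : IsCSS H) (hsc : SimplyConnected H)
    (hB : ∀ ℓ, IsSepBlock D (Bs ℓ)) {J K : Finset I} (w : (skeleton H 1).Walk J K)
    (heven : ∀ ℓ, Even (crossings (Bs ℓ) w)) (hw : crossings (⋃ ℓ, Bs ℓ) w ≠ 0) :
    ∃ w' : (skeleton H 1).Walk J K, crossings (⋃ ℓ, Bs ℓ) w' < crossings (⋃ ℓ, Bs ℓ) w := by
  set S := ⋃ ℓ, Bs ℓ
  have hBS : ∀ ℓ, Bs ℓ ⊆ S := Set.subset_iUnion Bs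
  have hBN : ∀ ℓ, Bs ℓ ⊆ D.N := fun ℓ _ he => ((hB ℓ).1.2.1 he).1
  obtain ⟨A₁, A₁', h₁, w₁, w₂, hA₁, hw₁, rfl⟩ := w.exists_first_crossing hw
  obtain ⟨ℓ, hℓ⟩ := Set.mem_iUnion.1 hA₁
  have hw₂ : Odd (crossings (Bs ℓ) w₂) := by
    have := heven ℓ
    rwa [crossings_append, crossings_eq_zero_of_subset (hBS ℓ) hw₁, zero_add,
      crossings_cons_of_mem h₁ w₂ hℓ, Nat.even_add_one, Nat.not_even_iff_odd] at this
  obtain ⟨A₂, A₂', h₂, w₃, w₄, hA₂, hw₃, rfl⟩ := w₂.exists_first_crossing hw₂.pos.ne'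
  have hw₄ : crossings S w₄ < crossings S (w₁.append (.cons h₁ (w₃.append (.cons h₂ w₄)))) := by
    simp only [crossings_append, crossings_cons_of_mem h₁ _ hA₁,
      crossings_cons_of_mem h₂ _ (hBS ℓ hA₂)]
    omega
  obtain ⟨γ, hγ⟩ := (hB ℓ).1.2.2.1.exists_walk hℓ hA₂
  obtain ⟨hA₁1, -, -⟩ := skeleton_adj.1 h₁
  obtain ⟨hA₂1, hA₂'1, -⟩ := skeleton_adj.1 h₂
  obtain ⟨U, hU, hUA₂, p, hp⟩ :=
    (hB ℓ).exists_avoiding_walk hH γ hγ hA₁1 Finset.subset_union_left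
  rcases eq_or_eq_of_subset_union_of_card_eq_one hU.2 hA₂1.2 hA₂'1.2 hUA₂ with rfl | rfl
  · -- the loop `A₁ → A₁' ⇝ A₂ ⇝ A₁` would cross `Bs ℓ` exactly once
    have := (hB ℓ).crossings_mod_two_eq hH hsc hA₁1 (.cons h₁ (w₃.append p.reverse)) .nil
    rw [crossings_cons_of_mem h₁ _ hℓ, crossings_append, crossings_reverse, hw₃,
      crossings_eq_zero_of_subset (hBN ℓ) hp] at this
    simp at this
  · refine ⟨w₁.append (p.append w₄), ?_⟩
    have hpS : crossings S p = 0 := crossings_eq_zero_of_subset (Set.iUnion_subset hBN) hp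
    rwa [crossings_append, crossings_append, hw₁, hpS, zero_add, zero_add]

theorem reachable_sdiff_cl_of_even_crossings (hH : IsCSS H) (hsc : SimplyConnected H)
    (hB : ∀ ℓ, IsSepBlock D (Bs ℓ)) {J K : Finset I} (hJ : J ∈ level H 1)
    (w : (skeleton H 1).Walk J K) (heven : ∀ ℓ, Even (crossings (Bs ℓ) w)) :
    (skeleton (H \ Cl H (⋃ ℓ, Bs ℓ)) 1).Reachable J K := by
  induction hn : crossings (⋃ ℓ, Bs ℓ) w using Nat.strong_induction_on generalizing w with
  | _ n ih =>
  rcases eq_or_ne n 0 with rfl | hn0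
  · exact (reachable_sdiff_cl_iff (card_eq_two_of_mem_iUnion hB)).2 ⟨w, hn⟩
  obtain ⟨w', hw'⟩ := exists_walk_crossings_lt hH hsc hB w heven (hn ▸ hn0)
  refine ih _ (hn ▸ hw') w' (fun ℓ => ?_) rfl
  rw [Nat.even_iff, (hB ℓ).crossings_mod_two_eq hH hsc hJ w' w, ← Nat.even_iff]
  exact heven ℓ

theorem reachable_sdiff_cl_iff_mem_BBset_iff (hH : IsCSS H) (hsc : SimplyConnected H)
    (hB : ∀ ℓ, IsSepBlock D (Bs ℓ)) (i₀ i j : I) :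
    (skeleton (H \ Cl H (⋃ ℓ, Bs ℓ)) 1).Reachable {i} {j} ↔
      ∀ ℓ, ({i} ∈ BBset H (Bs ℓ) i₀ ↔ {j} ∈ BBset H (Bs ℓ) i₀) := by
  have hlevel : ∀ x : I, {x} ∈ level H 1 := fun x => ⟨hH.2 x, Finset.card_singleton x⟩
  obtain ⟨p, -⟩ := hsc.1.exists_walk (hlevel i₀) (hlevel i)
  obtain ⟨q, -⟩ := hsc.1.exists_walk (hlevel i₀) (hlevel j)
  simp only [(hB _).mem_BBset_iff hH hsc p, (hB _).mem_BBset_iff hH hsc q, Nat.odd_iff]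
  constructor
  · intro hij ℓ
    obtain ⟨r, hr⟩ := (reachable_sdiff_cl_iff (card_eq_two_of_mem_iUnion hB)).1 hij
    rw [(hB ℓ).crossings_mod_two_eq hH hsc (hlevel i₀) q (p.append r), crossings_append,
      crossings_eq_zero_of_subset (Set.subset_iUnion Bs ℓ) hr, add_zero]
  · refine fun h => reachable_sdiff_cl_of_even_crossings hH hsc hB (hlevel i)
      (p.reverse.append q) fun ℓ => ?_
    rw [crossings_append, crossings_reverse, Nat.even_iff]
    have := h ℓ
    omega

end Reduction

end

theorem components_are_fibers_of_PhiM_general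
    {I : Type*} [DecidableEq I] (H : Set (Finset I))
    (hH : IsCSS H) (hsc : SimplyConnected H)
    (D : NodalDatum H) (n : ℕ) (B : Fin n → Set (Finset I))
    (hblock : ∀ ℓ : Fin n, IsSepBlock D (B ℓ))
    (i₀ : I) (m : ℕ) (hm : m ≤ n) :
    ∀ C : Set (Finset I),
      IsKComponent (H \ Cl H (⋃ ℓ : Fin m, B (Fin.castLE hm ℓ))) 1 (level H 1) C ↔
      ∃ c ∈ Set.range (PhiM H i₀ B m hm),
        C = {J : Finset I | ∃ i : I, J = ({i} : Finset I) ∧ PhiM H i₀ B m hm i = c} := by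
  have hB : ∀ ℓ : Fin m, IsSepBlock D (B (Fin.castLE hm ℓ)) := fun ℓ => hblock _
  intro C
  rw [level_one_eq_range hH.2]
  refine isKComponent_one_iff_fiber (fun i => ?_) _ (fun i j => ?_) C
  · exact singleton_mem_sdiff_cl (hH.2 i) fun L hL => by
      rw [card_eq_two_of_mem_iUnion hB L hL]
      omega
  · rw [reachable_sdiff_cl_iff_mem_BBset_iff hH hsc hB i₀, funext_iff]
    simp only [PhiM, decide_eq_decide]

/-- For every `0 ≤ m ≤ n`, the 1-connected components of `H(1)` in
`H_m = H \ Cl_H(B₁ ∪ … ∪ B_m)` are exactly the fibers `Φ_m⁻¹(c)`, `c ∈ Δ_m`. -/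
theorem components_are_fibers_of_PhiM
    {I : Type*} [Fintype I] [DecidableEq I] (H : Set (Finset I))
    (hH : IsCSS H) (hsc : SimplyConnected H)
    (D : NodalDatum H) (n : ℕ) (B : Fin n → Set (Finset I))
    (hblock : ∀ ℓ : Fin n, IsSepBlock D (B ℓ)) (hinj : Function.Injective B)
    (hsurj : ∀ C : Set (Finset I), IsSepBlock D C → ∃ ℓ : Fin n, C = B ℓ)
    (i₀ : I) (m : ℕ) (hm : m ≤ n) :
    ∀ C : Set (Finset I),
      IsKComponent (H \ Cl H (⋃ ℓ : Fin m, B (Fin.castLE hm ℓ))) 1 (level H 1) C ↔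
      ∃ c ∈ Set.range (PhiM H i₀ B m hm),
        C = {J : Finset I | ∃ i : I, J = ({i} : Finset I) ∧ PhiM H i₀ B m hm i = c} :=
  components_are_fibers_of_PhiM_general H hH hsc D n B hblock i₀ m hm
end

section
/- Let H ⊆ 𝒫(I) be a simply connected combinatorial strata structure with minimal set of indices I such that H = H_3 (every stratum has at most 3 elements). Let ∞ ∉ I and let B ⊆ H be a subset that is closed under taking subsets, contains only strata with at most 2 elements, satisfies B ∩ H(1) ≠ ∅, and is such that B ∩ H(1) is 1-connected in B. Then H′ = H ∪ {J ∪ {∞} : J ∈ B} is a simply connected combinatorial strata structure with minimal set of indices I ∪ {∞}. -/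
/-- `H_3 = {∅} ∪ H(1) ∪ H(2) ∪ H(3)`. -/
def H3 {I : Type*} (H : Set (Finset I)) : Set (Finset I) :=
  {(∅ : Finset I)} ∪ level H 1 ∪ level H 2 ∪ level H 3

/-- A combinatorial strata structure with minimal set of indices the finite set `I ⊆ α`:
a family of subsets of `I` closed under taking subsets and containing all singletons
`{i}`, `i ∈ I`. -/
def IsCSSOn {α : Type*} (I : Finset α) (H : Set (Finset α)) : Prop :=
  (∀ J ∈ H, J ⊆ I) ∧ (∀ J ∈ H, ∀ J' : Finset α, J' ⊆ J → J' ∈ H) ∧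
    ∀ i ∈ I, ({i} : Finset α) ∈ H

/-! A 1-path of the blow-up meets the new stratum `{infty}` only through neighbours in `B`.
A detour `a, {infty}, b` is homotopic to any 1-path `π` of `B` from `a` to `b`: the
triangles `{x, y, infty}` with `{x, y} ∈ B` sweep it across the cone over `π`. Removing the
interior visits of `{infty}` one by one turns every path with endpoints in `H` into a path of
`H`, where the simple connectivity of `H` applies. -/

theorem List.exists_eq_append_cons_cons_of_mem {β : Type*} {l : List β} {x : β} (h : x ∈ l)
    (hh : l.head? ≠ some x) (hl : l.getLast? ≠ some x) :
    ∃ δ a b ρ, l = δ ++ a :: x :: b :: ρ := by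
  obtain ⟨s, t, rfl⟩ := List.append_of_mem h
  rcases List.eq_nil_or_concat' s with rfl | ⟨δ, a, rfl⟩
  · simp at hh
  rcases t with _ | ⟨b, ρ⟩
  · simp at hl
  · exact ⟨δ, a, b, ρ, by simp⟩

section KPaths

variable {α : Type*} {H H' : Set (Finset α)}

theorem level_mono (h : H ⊆ H') (k : ℕ) : level H k ⊆ level H' k :=
  fun _ hJ => ⟨h hJ.1, hJ.2⟩

variable [DecidableEq α] {k : ℕ} {J J' : Finset α} {γ γ₁ γ₂ δ σ τ ρ : List (Finset α)}

theorem IsKPath.mono (h : H ⊆ H') (hγ : IsKPath H k γ) : IsKPath H' k γ :=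
  ⟨hγ.1, fun J hJ => level_mono h k (hγ.2.1 J hJ), hγ.2.2.imp fun _ _ => (level_mono h _ ·)⟩

theorem isKPath_iff :
    IsKPath H k γ ↔
      γ ≠ [] ∧ (∀ J ∈ γ, J ∈ level H k) ∧ γ.IsChain (fun J J' => J ∪ J' ∈ level H (k + 1)) :=
  Iff.rfl

theorem isKPath_singleton : IsKPath H k [J] ↔ J ∈ level H k := by
  simp [isKPath_iff]

theorem isKPath_cons_cons :
    IsKPath H k (J :: J' :: γ) ↔
      J ∈ level H k ∧ J ∪ J' ∈ level H (k + 1) ∧ IsKPath H k (J' :: γ) := by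
  simp only [isKPath_iff, List.isChain_cons_cons, List.mem_cons, forall_eq_or_imp]
  tauto

theorem IsKPath.append (h₁ : IsKPath H k γ₁) (h₂ : IsKPath H k γ₂)
    (h : ∀ J ∈ γ₁.getLast?, ∀ J' ∈ γ₂.head?, J ∪ J' ∈ level H (k + 1)) :
    IsKPath H k (γ₁ ++ γ₂) :=
  ⟨by simp [h₁.1], by simpa [or_imp, forall_and] using ⟨h₁.2.1, h₂.2.1⟩,
    List.isChain_append.2 ⟨h₁.2.2, h₂.2.2, h⟩⟩

theorem IsKPath.of_append_left (h : IsKPath H k (γ₁ ++ γ₂)) (hne : γ₁ ≠ []) :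
    IsKPath H k γ₁ :=
  ⟨hne, fun J hJ => h.2.1 J (List.mem_append_left _ hJ), h.2.2.left_of_append⟩

theorem IsKPath.of_append_right (h : IsKPath H k (γ₁ ++ γ₂)) (hne : γ₂ ≠ []) :
    IsKPath H k γ₂ :=
  ⟨hne, fun J hJ => h.2.1 J (List.mem_append_right _ hJ), h.2.2.right_of_append⟩

theorem IsKPath.union_mem_level (h : IsKPath H k (δ ++ J :: J' :: ρ)) :
    J ∪ J' ∈ level H (k + 1) :=
  (List.isChain_append_cons_cons.1 h.2.2).2.1

theorem IsKPath.replace_middle (h : IsKPath H k (δ ++ σ ++ ρ)) (hτ : IsKPath H k τ)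
    (hh : τ.head? = σ.head?) (hl : τ.getLast? = σ.getLast?) :
    IsKPath H k (δ ++ τ ++ ρ) := by
  refine isKPath_iff.2 ⟨by simp [hτ.1], fun J hJ => ?_, ?_⟩
  · simp only [List.mem_append] at hJ
    rcases hJ with (hJ | hJ) | hJ
    · exact h.2.1 J (by simp [hJ])
    · exact hτ.2.1 J hJ
    · exact h.2.1 J (by simp [hJ])
  · have hc := (isKPath_iff.1 h).2.2
    rw [List.isChain_append, List.isChain_append] at hc ⊢
    simp only [List.getLast?_append, hh, hl] at hc ⊢
    exact ⟨⟨hc.1.1, hτ.2.2, hc.1.2.2⟩, hc.2⟩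

end KPaths

section Homotopy

variable {α : Type*} [DecidableEq α] {H H' A A' : Set (Finset α)}
  {γ γ' γ₁ γ₂ δ ε ε' σ σ' ρ : List (Finset α)}

def IsPathIn (H A : Set (Finset α)) (γ : List (Finset α)) : Prop :=
  IsKPath H 1 γ ∧ ∀ J ∈ γ, J ∈ A

theorem isPathIn_level_one_iff : IsPathIn H (level H 1) γ ↔ IsKPath H 1 γ :=
  ⟨And.left, fun h => ⟨h, h.2.1⟩⟩

theorem IsPathIn.mono (hH : H ⊆ H') (hA : A ⊆ A') (h : IsPathIn H A γ) : IsPathIn H' A' γ :=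
  ⟨h.1.mono hH, fun J hJ => hA (h.2 J hJ)⟩

theorem IsPathIn.of_append_left (h : IsPathIn H A (γ₁ ++ γ₂)) (hne : γ₁ ≠ []) :
    IsPathIn H A γ₁ :=
  ⟨h.1.of_append_left hne, fun J hJ => h.2 J (List.mem_append_left _ hJ)⟩

theorem IsPathIn.of_append_right (h : IsPathIn H A (γ₁ ++ γ₂)) (hne : γ₂ ≠ []) :
    IsPathIn H A γ₂ :=
  ⟨h.1.of_append_right hne, fun J hJ => h.2 J (List.mem_append_right _ hJ)⟩

theorem IsPathIn.replace_middle (h : IsPathIn H A (δ ++ σ ++ ρ)) (hσ' : IsPathIn H A σ')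
    (hh : σ'.head? = σ.head?) (hl : σ'.getLast? = σ.getLast?) :
    IsPathIn H A (δ ++ σ' ++ ρ) := by
  refine ⟨h.1.replace_middle hσ'.1 hh hl, fun J hJ => ?_⟩
  simp only [List.mem_append] at hJ
  rcases hJ with (hJ | hJ) | hJ
  · exact h.2 J (by simp [hJ])
  · exact hσ'.2 J hJ
  · exact h.2 J (by simp [hJ])

theorem ElemPairCore.endpoints (h : ElemPairCore H ε ε') :
    ε.head? = ε'.head? ∧ ε.getLast? = ε'.getLast? := by
  rcases h with rfl | ⟨i₁, i₂, rfl, rfl⟩ | ⟨i₁, i₂, i₃, rfl, rfl, -⟩ <;> simp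

theorem ElemPair.endpoints (h : ElemPair H ε ε') :
    ε.head? = ε'.head? ∧ ε.getLast? = ε'.getLast? :=
  h.elim ElemPairCore.endpoints fun h => (h.endpoints).imp Eq.symm Eq.symm

theorem ElemPair.symm (h : ElemPair H ε ε') : ElemPair H ε' ε :=
  Or.symm h

theorem ElemPairCore.mono (hH : H ⊆ H') (h : ElemPairCore H ε ε') : ElemPairCore H' ε ε' :=
  h.imp_right <| Or.imp_right fun ⟨i₁, i₂, i₃, h₁, h₂, h₃⟩ => ⟨i₁, i₂, i₃, h₁, h₂, h₃.mono hH⟩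

theorem ElemPair.mono (hH : H ⊆ H') (h : ElemPair H ε ε') : ElemPair H' ε ε' :=
  h.imp (ElemPairCore.mono hH) (ElemPairCore.mono hH)

theorem ElemHomotopy.endpoints (h : ElemHomotopy H γ γ') :
    γ.head? = γ'.head? ∧ γ.getLast? = γ'.getLast? := by
  obtain ⟨δ, ε, ε', ρ, hε, rfl, rfl⟩ := h
  obtain ⟨hh, hl⟩ := hε.endpoints
  exact ⟨by simp [List.head?_append, hh], by simp [List.getLast?_append, hl]⟩

theorem ElemHomotopy.symm (h : ElemHomotopy H γ γ') : ElemHomotopy H γ' γ :=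
  let ⟨δ, ε, ε', ρ, hε, h₁, h₂⟩ := h
  ⟨δ, ε', ε, ρ, hε.symm, h₂, h₁⟩

theorem ElemHomotopy.mono (hH : H ⊆ H') (h : ElemHomotopy H γ γ') : ElemHomotopy H' γ γ' :=
  let ⟨δ, ε, ε', ρ, hε, h₁, h₂⟩ := h
  ⟨δ, ε, ε', ρ, hε.mono hH, h₁, h₂⟩

theorem ElemHomotopy.append_append (h : ElemHomotopy H σ σ') :
    ElemHomotopy H (δ ++ σ ++ ρ) (δ ++ σ' ++ ρ) := by
  obtain ⟨δ', ε, ε', ρ', hε, rfl, rfl⟩ := h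
  exact ⟨δ ++ δ', ε, ε', ρ' ++ ρ, hε, by simp, by simp⟩

namespace HomotopicIn

theorem isPathIn_left (h : HomotopicIn H A γ γ') : IsPathIn H A γ := h.1

theorem isPathIn_right (h : HomotopicIn H A γ γ') : IsPathIn H A γ' := by
  obtain ⟨hγ, hr⟩ := h
  induction hr with
  | refl => exact hγ
  | tail _ hstep _ => exact hstep.2

theorem refl (h : IsPathIn H A γ) : HomotopicIn H A γ γ := ⟨h, .refl⟩

theorem trans {γ'' : List (Finset α)} (h : HomotopicIn H A γ γ')
    (h' : HomotopicIn H A γ' γ'') : HomotopicIn H A γ γ'' :=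
  ⟨h.1, h.2.trans h'.2⟩

instance : Trans (HomotopicIn H A) (HomotopicIn H A) (HomotopicIn H A) := ⟨trans⟩

theorem symm (h : HomotopicIn H A γ γ') : HomotopicIn H A γ' γ := by
  obtain ⟨hγ, hr⟩ := h
  induction hr with
  | refl => exact refl hγ
  | @tail γ₁ γ₂ hr hstep ih =>
    exact trans ⟨hstep.2, .single ⟨hstep.1.symm, isPathIn_right ⟨hγ, hr⟩⟩⟩ ih

theorem endpoints (h : HomotopicIn H A γ γ') :
    γ.head? = γ'.head? ∧ γ.getLast? = γ'.getLast? := by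
  obtain ⟨-, hr⟩ := h
  induction hr with
  | refl => exact ⟨rfl, rfl⟩
  | tail _ hstep ih =>
    obtain ⟨hh, hl⟩ := hstep.1.endpoints
    exact ⟨ih.1.trans hh, ih.2.trans hl⟩

theorem mono (hH : H ⊆ H') (hA : A ⊆ A') (h : HomotopicIn H A γ γ') :
    HomotopicIn H' A' γ γ' :=
  ⟨IsPathIn.mono hH hA h.1,
    Relation.ReflTransGen.mono (fun _ _ hs => ⟨hs.1.mono hH, IsPathIn.mono hH hA hs.2⟩) _ _ h.2⟩

theorem of_elemPair (hε : ElemPair H ε ε') (h : IsPathIn H A (δ ++ ε ++ ρ))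
    (h' : IsPathIn H A (δ ++ ε' ++ ρ)) : HomotopicIn H A (δ ++ ε ++ ρ) (δ ++ ε' ++ ρ) :=
  ⟨h, .single ⟨⟨δ, ε, ε', ρ, hε, rfl, rfl⟩, h'⟩⟩

theorem append_append (h : HomotopicIn H A σ σ') (hw : IsPathIn H A (δ ++ σ ++ ρ)) :
    HomotopicIn H A (δ ++ σ ++ ρ) (δ ++ σ' ++ ρ) := by
  obtain ⟨hσ, hr⟩ := h
  induction hr with
  | refl => exact refl hw
  | @tail σ₁ σ₂ hr hstep ih =>
    obtain ⟨hh, hl⟩ := endpoints (show HomotopicIn H A σ σ₂ from ⟨hσ, hr.tail hstep⟩)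
    exact ih.trans ⟨ih.isPathIn_right, .single
      ⟨hstep.1.append_append, hw.replace_middle hstep.2 hh.symm hl.symm⟩⟩

theorem cons_backtrack {c v : Finset α} {t : List (Finset α)}
    (h : IsPathIn H A (c :: v :: t)) : HomotopicIn H A (v :: t) (v :: c :: v :: t) := by
  obtain ⟨hc, hcv, hvt⟩ := isKPath_cons_cons.1 h.1
  obtain ⟨x, rfl⟩ := Finset.card_eq_one.1 (hvt.2.1 v (by simp)).2
  obtain ⟨y, rfl⟩ := Finset.card_eq_one.1 hc.2
  have hpair : ElemPair H [{x}] [{x}, {y}, {x}] := Or.inr (Or.inr (Or.inl ⟨x, y, rfl, rfl⟩))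
  have hvt' : IsPathIn H A ({x} :: t) :=
    IsPathIn.of_append_right (γ₁ := [{y}]) (γ₂ := {x} :: t) h (by simp)
  have hvcvt : IsPathIn H A ({x} :: {y} :: {x} :: t) :=
    ⟨isKPath_cons_cons.2 ⟨hvt.2.1 _ (by simp), Finset.union_comm {y} {x} ▸ hcv, h.1⟩,
      fun J hJ => h.2 J (by simp only [List.mem_cons] at hJ ⊢; tauto)⟩
  exact of_elemPair (δ := []) (ρ := t) hpair hvt' hvcvt

theorem concat_backtrack {c v : Finset α} {s : List (Finset α)}
    (h : IsPathIn H A (s ++ [v, c])) : HomotopicIn H A (s ++ [v]) (s ++ [v, c, v]) := by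
  have hvc : v ∪ c ∈ level H 2 := h.1.union_mem_level (δ := s) (ρ := [])
  have hv : v ∈ level H 1 := h.1.2.1 v (by simp)
  obtain ⟨x, rfl⟩ := Finset.card_eq_one.1 hv.2
  obtain ⟨y, rfl⟩ := Finset.card_eq_one.1 (h.1.2.1 c (by simp)).2
  have hpair : ElemPair H [{x}] [{x}, {y}, {x}] := Or.inr (Or.inr (Or.inl ⟨x, y, rfl, rfl⟩))
  have hsv : IsPathIn H A (s ++ [{x}]) :=
    IsPathIn.of_append_left (γ₂ := [{y}]) (by simpa using h) (by simp)
  have hsvcv : IsPathIn H A (s ++ [{x}, {y}, {x}]) := by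
    have hpath := h.1.append (isKPath_singleton.2 hv) fun J hJ J' hJ' => by
      simp only [List.getLast?_append, List.getLast?_cons_cons, List.getLast?_singleton,
        Option.some_or, Option.mem_def, Option.some.injEq, List.head?_cons] at hJ hJ'
      rw [← hJ, ← hJ', Finset.union_comm]
      exact hvc
    refine ⟨by simpa using hpath, fun J hJ => h.2 J ?_⟩
    simp only [List.mem_append, List.mem_cons] at hJ ⊢
    tauto
  simpa using of_elemPair (δ := s) (ρ := []) hpair (by simpa using hsv) (by simpa using hsvcv)

theorem of_cons {c v : Finset α} (h : HomotopicIn H A (c :: γ) (c :: γ'))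
    (hv : γ.head? = some v) (hv' : γ'.head? = some v) : HomotopicIn H A γ γ' := by
  obtain ⟨t, rfl⟩ := List.head?_eq_some_iff.1 hv
  obtain ⟨t', rfl⟩ := List.head?_eq_some_iff.1 hv'
  have hback := cons_backtrack h.isPathIn_left
  calc HomotopicIn H A (v :: t) (v :: c :: v :: t) := hback
    HomotopicIn H A _ (v :: c :: v :: t') := by
      simpa using h.append_append (δ := [v]) (ρ := []) (by simpa using hback.isPathIn_right)
    HomotopicIn H A _ (v :: t') := (cons_backtrack h.isPathIn_right).symm

theorem of_concat {c v : Finset α} (h : HomotopicIn H A (γ ++ [c]) (γ' ++ [c]))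
    (hv : γ.getLast? = some v) (hv' : γ'.getLast? = some v) : HomotopicIn H A γ γ' := by
  obtain ⟨s, rfl⟩ := List.getLast?_eq_some_iff.1 hv
  obtain ⟨s', rfl⟩ := List.getLast?_eq_some_iff.1 hv'
  have hback := concat_backtrack (by simpa using h.isPathIn_left)
  calc HomotopicIn H A (s ++ [v]) (s ++ [v, c, v]) := hback
    HomotopicIn H A _ (s' ++ [v, c, v]) := by
      simpa using h.append_append (δ := []) (ρ := [v]) (by simpa using hback.isPathIn_right)
    HomotopicIn H A _ (s' ++ [v]) :=
      (concat_backtrack (by simpa using h.isPathIn_right)).symm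

end HomotopicIn

end Homotopy

section Blowup

variable {α : Type*} [DecidableEq α] {infty : α} {H B : Set (Finset α)} {k : ℕ}
  {K : Finset α} {γ γ' δ π ρ : List (Finset α)}

def blowup (infty : α) (H B : Set (Finset α)) : Set (Finset α) :=
  H ∪ {K | ∃ J ∈ B, K = insert infty J}

theorem subset_blowup : H ⊆ blowup infty H B := Set.subset_union_left

theorem mem_level_blowup_of_notMem (hK : infty ∉ K) :
    K ∈ level (blowup infty H B) k ↔ K ∈ level H k := by
  refine ⟨fun ⟨hmem, hcard⟩ => ⟨?_, hcard⟩, (level_mono subset_blowup k ·)⟩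
  rcases hmem with hmem | ⟨J, -, rfl⟩
  · exact hmem
  · exact absurd (Finset.mem_insert_self _ _) hK

theorem insert_mem_level_blowup_iff (hni : ∀ J ∈ H, infty ∉ J) (hBH : B ⊆ H) (hK : infty ∉ K) :
    insert infty K ∈ level (blowup infty H B) (k + 1) ↔ K ∈ level B k := by
  constructor
  · rintro ⟨hmem | ⟨J, hJ, hKJ⟩, hcard⟩
    · exact absurd (Finset.mem_insert_self _ _) (hni _ hmem)
    · obtain rfl : K = J := by
        simpa [Finset.erase_insert hK, Finset.erase_insert (hni J (hBH hJ))] using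
          congrArg (·.erase infty) hKJ
      exact ⟨hJ, by simpa [Finset.card_insert_of_notMem hK] using hcard⟩
  · rintro ⟨hKB, hcard⟩
    exact ⟨Or.inr ⟨K, hKB, rfl⟩, by rw [Finset.card_insert_of_notMem hK, hcard]⟩

theorem eq_singleton_or_mem_level_of_mem_level_blowup (hK : K ∈ level (blowup infty H B) 1) :
    K = {infty} ∨ K ∈ level H 1 := by
  obtain ⟨x, rfl⟩ := Finset.card_eq_one.1 hK.2
  by_cases hx : x = infty
  · exact Or.inl (hx ▸ rfl)
  · exact Or.inr ((mem_level_blowup_of_notMem (by simpa [eq_comm] using hx)).1 hK)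

theorem singleton_mem_level_blowup (hni : ∀ J ∈ H, infty ∉ J) (hBH : B ⊆ H) (hB0 : ∅ ∈ B) :
    {infty} ∈ level (blowup infty H B) 1 := by
  simpa using (insert_mem_level_blowup_iff hni hBH (Finset.notMem_empty infty) (k := 0)).2
    ⟨hB0, rfl⟩

theorem insert_mem_level_two_blowup (hni : ∀ J ∈ H, infty ∉ J) (hBH : B ⊆ H)
    (hK : K ∈ level B 1) : insert infty K ∈ level (blowup infty H B) 2 :=
  (insert_mem_level_blowup_iff hni hBH (hni K (hBH hK.1))).2 hK

theorem mem_level_of_insert_mem_level_blowup (hni : ∀ J ∈ H, infty ∉ J) (hBH : B ⊆ H)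
    (hK : K ∈ level (blowup infty H B) 1) (h : insert infty K ∈ level (blowup infty H B) 2) :
    K ∈ level B 1 := by
  rcases eq_singleton_or_mem_level_of_mem_level_blowup hK with rfl | hKH
  · simpa using h.2
  · exact (insert_mem_level_blowup_iff hni hBH (hni K hKH.1)).1 h

theorem IsKPath.of_blowup (hni : ∀ J ∈ H, infty ∉ J) (hγ : IsKPath (blowup infty H B) 1 γ)
    (h : {infty} ∉ γ) : IsKPath H 1 γ := by
  have hmem : ∀ K ∈ γ, K ∈ level H 1 := fun K hK =>
    (eq_singleton_or_mem_level_of_mem_level_blowup (hγ.2.1 K hK)).resolve_left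
      (by rintro rfl; exact h hK)
  refine isKPath_iff.2 ⟨hγ.1, hmem, (isKPath_iff.1 hγ).2.2.imp_of_mem_imp ?_⟩
  intro K K' hK hK' hKK'
  exact (mem_level_blowup_of_notMem (by simp [hni _ (hmem K hK).1, hni _ (hmem K' hK').1])).1
    hKK'

theorem isKPath_two_blowup (hni : ∀ J ∈ H, infty ∉ J) (hBH : B ⊆ H) {x y : α}
    (hy : {y} ∈ level B 1) (hxy : {x} ∪ {y} ∈ level B 2) :
    IsKPath (blowup infty H B) 2 [{x, y}, {y, infty}] := by
  have hxy' : {x, y} ∈ level (blowup infty H B) 2 := by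
    rw [Finset.insert_eq]
    exact level_mono (hBH.trans subset_blowup) 2 hxy
  have hyi : {y, infty} ∈ level (blowup infty H B) 2 := by
    rw [Finset.pair_comm]
    exact insert_mem_level_two_blowup hni hBH hy
  have htri : {x, y} ∪ {y, infty} ∈ level (blowup infty H B) 3 := by
    have hinf : infty ∉ {x} ∪ {y} := hni _ (hBH hxy.1)
    rw [show ({x, y} ∪ {y, infty} : Finset α) = insert infty ({x} ∪ {y}) by grind]
    exact (insert_mem_level_blowup_iff hni hBH hinf).2 hxy
  exact isKPath_cons_cons.2 ⟨hxy', htri, isKPath_singleton.2 hyi⟩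

theorem union_singleton_mem_level_two_blowup (hni : ∀ J ∈ H, infty ∉ J) (hBH : B ⊆ H)
    {K : Finset α} (hK : K ∈ level B 1) :
    K ∪ {infty} ∈ level (blowup infty H B) 2 ∧ {infty} ∪ K ∈ level (blowup infty H B) 2 := by
  rw [Finset.union_comm, and_self, ← Finset.insert_eq]
  exact insert_mem_level_two_blowup hni hBH hK

theorem homotopicIn_blowup_fan (hni : ∀ J ∈ H, infty ∉ J) (hBH : B ⊆ H) {x y : α}
    (hx : {x} ∈ level B 1) (hy : {y} ∈ level B 1) (hxy : {x} ∪ {y} ∈ level B 2)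
    (hρ : IsKPath (blowup infty H B) 1 ({infty} :: ρ)) :
    HomotopicIn (blowup infty H B) (level (blowup infty H B) 1)
      ({x} :: {infty} :: ρ) ({x} :: {y} :: {infty} :: ρ) := by
  have hBH' : B ⊆ blowup infty H B := hBH.trans subset_blowup
  have hpair : ElemPair (blowup infty H B) [{x}, {infty}] [{x}, {y}, {infty}] :=
    Or.inl (Or.inr (Or.inr ⟨x, infty, y, rfl, rfl, isKPath_two_blowup hni hBH hy hxy⟩))
  refine HomotopicIn.of_elemPair (δ := []) (ρ := ρ) hpair ?_ ?_ <;>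
    refine isPathIn_level_one_iff.2 (isKPath_cons_cons.2 ⟨level_mono hBH' 1 hx, ?_, ?_⟩)
  · exact (union_singleton_mem_level_two_blowup hni hBH hx).1
  · exact hρ
  · exact level_mono hBH' 2 hxy
  · exact isKPath_cons_cons.2 ⟨level_mono hBH' 1 hy,
      (union_singleton_mem_level_two_blowup hni hBH hy).1, hρ⟩

theorem homotopicIn_blowup_cone (hni : ∀ J ∈ H, infty ∉ J) (hBH : B ⊆ H) (hB0 : ∅ ∈ B)
    (hπ : IsKPath B 1 π) {a b : Finset α} (ha : π.head? = some a) (hb : π.getLast? = some b) :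
    HomotopicIn (blowup infty H B) (level (blowup infty H B) 1) [a, {infty}, b] π := by
  have hBH' : B ⊆ blowup infty H B := hBH.trans subset_blowup
  induction π generalizing a with
  | nil => simp at ha
  | cons a' π ih =>
    obtain rfl : a = a' := by simpa [eq_comm] using ha
    have haB : a ∈ level B 1 := hπ.2.1 a (by simp)
    obtain ⟨x, rfl⟩ := Finset.card_eq_one.1 haB.2
    cases π with
    | nil =>
      obtain rfl : b = {x} := by simpa using hb.symm
      have hpair : ElemPair (blowup infty H B) [{x}, {infty}, {x}] [{x}] :=
        Or.inl (Or.inr (Or.inl ⟨x, infty, rfl, rfl⟩))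
      have hedge := union_singleton_mem_level_two_blowup hni hBH haB
      have hx := level_mono hBH' 1 haB
      refine HomotopicIn.of_elemPair (δ := []) (ρ := []) hpair
        (isPathIn_level_one_iff.2 (isKPath_cons_cons.2 ⟨hx, hedge.1, isKPath_cons_cons.2
          ⟨singleton_mem_level_blowup hni hBH hB0, hedge.2, isKPath_singleton.2 hx⟩⟩))
        (isPathIn_level_one_iff.2 (isKPath_singleton.2 hx))
    | cons a'' π =>
      have hyB : a'' ∈ level B 1 := hπ.2.1 a'' (by simp)
      obtain ⟨y, rfl⟩ := Finset.card_eq_one.1 hyB.2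
      have hrest := ih (hπ.of_append_right (γ₁ := [{x}]) (by simp)) rfl (by simpa using hb)
      have hinfty : IsKPath (blowup infty H B) 1 [{infty}, b] :=
        hrest.isPathIn_left.1.of_append_right (γ₁ := [{y}]) (by simp)
      have hfan := homotopicIn_blowup_fan hni hBH haB hyB (hπ.union_mem_level (δ := [])) hinfty
      have hcone := hrest.append_append (δ := [{x}]) (ρ := [])
        (by simpa using hfan.isPathIn_right)
      exact hfan.trans (by simpa using hcone)

theorem exists_homotopicIn_blowup_of_detour (hni : ∀ J ∈ H, infty ∉ J) (hBH : B ⊆ H)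
    (hB0 : ∅ ∈ B) (hBconn : KConnectedIn B 1 (B ∩ level H 1)) {a b : Finset α}
    (hγ : IsKPath (blowup infty H B) 1 (δ ++ a :: {infty} :: b :: ρ)) :
    ∃ π, {infty} ∉ π ∧ HomotopicIn (blowup infty H B) (level (blowup infty H B) 1)
      (δ ++ a :: {infty} :: b :: ρ) (δ ++ π ++ ρ) := by
  have haB : a ∈ level B 1 := by
    refine mem_level_of_insert_mem_level_blowup hni hBH (hγ.2.1 a (by simp)) ?_
    rw [Finset.insert_eq, Finset.union_comm]
    exact hγ.union_mem_level
  have hbB : b ∈ level B 1 := by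
    refine mem_level_of_insert_mem_level_blowup hni hBH (hγ.2.1 b (by simp)) ?_
    rw [Finset.insert_eq]
    exact (show IsKPath _ 1 ((δ ++ [a]) ++ {infty} :: b :: ρ) by simpa using hγ).union_mem_level
  obtain ⟨π, hπ, ⟨hπa, hπb⟩, -⟩ :=
    hBconn a ⟨haB.1, level_mono hBH 1 haB⟩ b ⟨hbB.1, level_mono hBH 1 hbB⟩
  refine ⟨π, fun h => hni _ (hBH (hπ.2.1 _ h).1) (Finset.mem_singleton_self _), ?_⟩
  simpa using (homotopicIn_blowup_cone hni hBH hB0 hπ hπa hπb).append_append (δ := δ) (ρ := ρ)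
    (by simpa using isPathIn_level_one_iff.2 hγ)

theorem exists_isKPath_homotopicIn_blowup (hni : ∀ J ∈ H, infty ∉ J) (hBH : B ⊆ H)
    (hB0 : ∅ ∈ B) (hBconn : KConnectedIn B 1 (B ∩ level H 1))
    (hγ : IsKPath (blowup infty H B) 1 γ) (hh : γ.head? ≠ some {infty})
    (hl : γ.getLast? ≠ some {infty}) :
    ∃ γ₀, IsKPath H 1 γ₀ ∧ HomotopicIn (blowup infty H B) (level (blowup infty H B) 1) γ γ₀ := by
  induction hn : γ.count {infty} using Nat.strong_induction_on generalizing γ with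
  | _ n ih =>
  by_cases hmem : {infty} ∈ γ
  · obtain ⟨δ, a, b, ρ, rfl⟩ := List.exists_eq_append_cons_cons_of_mem hmem hh hl
    obtain ⟨π, hπ, hhom⟩ := exists_homotopicIn_blowup_of_detour hni hBH hB0 hBconn hγ
    have hlt : (δ ++ π ++ ρ).count {infty} < n := by
      rw [← hn]
      simp only [List.count_append, List.count_eq_zero.2 hπ, List.count_cons_self,
        List.count_cons]
      omega
    obtain ⟨hh', hl'⟩ := hhom.endpoints
    obtain ⟨γ₀, hγ₀, hhom₀⟩ :=
      ih _ hlt hhom.isPathIn_right.1 (hh' ▸ hh) (hl' ▸ hl) rfl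
    exact ⟨γ₀, hγ₀, hhom.trans hhom₀⟩
  · exact ⟨γ, hγ.of_blowup hni hmem, .refl (isPathIn_level_one_iff.2 hγ)⟩

theorem homotopicIn_blowup_of_ne (hni : ∀ J ∈ H, infty ∉ J) (hBH : B ⊆ H) (hB0 : ∅ ∈ B)
    (hBconn : KConnectedIn B 1 (B ∩ level H 1)) (hsc : SimplyConnected H)
    (hγ : IsKPath (blowup infty H B) 1 γ) (hγ' : IsKPath (blowup infty H B) 1 γ')
    (hh : γ.head? = γ'.head?) (hl : γ.getLast? = γ'.getLast?)
    (hne : γ.head? ≠ some {infty}) (hne' : γ.getLast? ≠ some {infty}) :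
    HomotopicIn (blowup infty H B) (level (blowup infty H B) 1) γ γ' := by
  obtain ⟨γ₀, hγ₀, h₀⟩ := exists_isKPath_homotopicIn_blowup hni hBH hB0 hBconn hγ hne hne'
  obtain ⟨γ₀', hγ₀', h₀'⟩ :=
    exists_isKPath_homotopicIn_blowup hni hBH hB0 hBconn hγ' (hh ▸ hne) (hl ▸ hne')
  have hH := hsc.2 γ₀ γ₀' hγ₀ hγ₀' hγ₀.2.1 hγ₀'.2.1
    (by rw [← h₀.endpoints.1, ← h₀'.endpoints.1, hh])
    (by rw [← h₀.endpoints.2, ← h₀'.endpoints.2, hl])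
  exact h₀.trans ((hH.mono subset_blowup (level_mono subset_blowup 1)).trans h₀'.symm)

/-- An endpoint at `{infty}` is moved off it by a backtrack to a neighbour `c` of `{infty}`. -/
theorem homotopicIn_blowup_of_getLast?_ne (hni : ∀ J ∈ H, infty ∉ J) (hBH : B ⊆ H)
    (hB0 : ∅ ∈ B) (hBconn : KConnectedIn B 1 (B ∩ level H 1)) (hsc : SimplyConnected H)
    {c : Finset α} (hc : c ∈ B ∩ level H 1)
    (hγ : IsKPath (blowup infty H B) 1 γ) (hγ' : IsKPath (blowup infty H B) 1 γ')
    (hh : γ.head? = γ'.head?) (hl : γ.getLast? = γ'.getLast?)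
    (hne : γ.getLast? ≠ some {infty}) :
    HomotopicIn (blowup infty H B) (level (blowup infty H B) 1) γ γ' := by
  by_cases hinf : γ.head? = some {infty}
  · have hcons : ∀ {γ : List (Finset α)}, IsKPath (blowup infty H B) 1 γ →
        γ.head? = some {infty} → IsKPath (blowup infty H B) 1 ([c] ++ γ) := fun hγ h =>
      (isKPath_singleton.2 (level_mono subset_blowup 1 hc.2)).append hγ
        (by simpa [h] using (union_singleton_mem_level_two_blowup hni hBH ⟨hc.1, hc.2.2⟩).1)
    have hv := List.getLast?_eq_some_getLast hγ.1
    rw [hv] at hne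
    refine HomotopicIn.of_cons (homotopicIn_blowup_of_ne hni hBH hB0 hBconn hsc
      (hcons hγ hinf) (hcons hγ' (hh ▸ hinf)) rfl ?_ ?_ ?_) hinf (hh ▸ hinf)
    · simp [List.getLast?_cons, hl]
    · rintro ⟨⟩
      exact hni _ hc.2.1 (Finset.mem_singleton_self _)
    · simpa [List.getLast?_cons, hv] using hne
  · exact homotopicIn_blowup_of_ne hni hBH hB0 hBconn hsc hγ hγ' hh hl hinf hne

theorem homotopicIn_blowup (hni : ∀ J ∈ H, infty ∉ J) (hBH : B ⊆ H) (hB0 : ∅ ∈ B)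
    (hBne : (B ∩ level H 1).Nonempty) (hBconn : KConnectedIn B 1 (B ∩ level H 1))
    (hsc : SimplyConnected H)
    (hγ : IsKPath (blowup infty H B) 1 γ) (hγ' : IsKPath (blowup infty H B) 1 γ')
    (hh : γ.head? = γ'.head?) (hl : γ.getLast? = γ'.getLast?) :
    HomotopicIn (blowup infty H B) (level (blowup infty H B) 1) γ γ' := by
  obtain ⟨c, hc⟩ := hBne
  by_cases hinf : γ.getLast? = some {infty}
  · have hsnoc : ∀ {γ : List (Finset α)}, IsKPath (blowup infty H B) 1 γ →
        γ.getLast? = some {infty} → IsKPath (blowup infty H B) 1 (γ ++ [c]) := fun hγ h =>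
      hγ.append (isKPath_singleton.2 (level_mono subset_blowup 1 hc.2))
        (by simpa [h] using (union_singleton_mem_level_two_blowup hni hBH ⟨hc.1, hc.2.2⟩).2)
    refine HomotopicIn.of_concat (homotopicIn_blowup_of_getLast?_ne hni hBH hB0 hBconn hsc hc
      (hsnoc hγ hinf) (hsnoc hγ' (hl ▸ hinf)) (by simp [List.head?_append, hh]) (by simp) ?_)
      hinf (hl ▸ hinf)
    rw [List.getLast?_concat]
    rintro ⟨⟩
    exact hni _ hc.2.1 (Finset.mem_singleton_self _)
  · exact homotopicIn_blowup_of_getLast?_ne hni hBH hB0 hBconn hsc hc hγ hγ' hh hl hinf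

theorem kConnectedIn_blowup (hni : ∀ J ∈ H, infty ∉ J) (hBH : B ⊆ H) (hB0 : ∅ ∈ B)
    (hBne : (B ∩ level H 1).Nonempty) (hconn : KConnectedIn H 1 (level H 1)) :
    KConnectedIn (blowup infty H B) 1 (level (blowup infty H B) 1) := by
  obtain ⟨c, hcB, hcH⟩ := hBne
  have hinf := singleton_mem_level_blowup hni hBH hB0
  have hedge := union_singleton_mem_level_two_blowup hni hBH ⟨hcB, hcH.2⟩
  have to_level : ∀ J ∈ level (blowup infty H B) 1, ∀ J' ∈ level H 1,
      ∃ γ, IsKPath (blowup infty H B) 1 γ ∧ Joins γ J J' := by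
    intro J hJ J' hJ'
    rcases eq_singleton_or_mem_level_of_mem_level_blowup hJ with rfl | hJH
    · obtain ⟨τ, hτ, ⟨hτh, hτl⟩, -⟩ := hconn c hcH J' hJ'
      refine ⟨[{infty}] ++ τ, (isKPath_singleton.2 hinf).append (hτ.mono subset_blowup)
        (by simpa [hτh] using hedge.2), rfl, by simp [List.getLast?_cons, hτl]⟩
    · obtain ⟨τ, hτ, hj, -⟩ := hconn J hJH J' hJ'
      exact ⟨τ, hτ.mono subset_blowup, hj⟩
  intro J hJ J' hJ'
  suffices ∃ γ, IsKPath (blowup infty H B) 1 γ ∧ Joins γ J J' from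
    let ⟨γ, hγ, hj⟩ := this
    ⟨γ, hγ, hj, hγ.2.1⟩
  rcases eq_singleton_or_mem_level_of_mem_level_blowup hJ' with rfl | hJ'H
  · obtain ⟨τ, hτ, hτh, hτl⟩ := to_level J hJ c hcH
    exact ⟨τ ++ [{infty}], hτ.append (isKPath_singleton.2 hinf) (by simpa [hτl] using hedge.1),
      by simp [List.head?_append, hτh], by simp⟩
  · exact to_level J hJ J' hJ'H

theorem simplyConnected_blowup (hni : ∀ J ∈ H, infty ∉ J) (hBH : B ⊆ H) (hB0 : ∅ ∈ B)
    (hBne : (B ∩ level H 1).Nonempty) (hBconn : KConnectedIn B 1 (B ∩ level H 1))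
    (hsc : SimplyConnected H) : SimplyConnected (blowup infty H B) :=
  ⟨kConnectedIn_blowup hni hBH hB0 hBne hsc.1, fun _ _ hγ hγ' _ _ hh hl =>
    homotopicIn_blowup hni hBH hB0 hBne hBconn hsc hγ hγ' hh hl⟩

theorem isCSSOn_blowup {I : Finset α} (hinfty : infty ∉ I) (hH : IsCSSOn I H) (hBH : B ⊆ H)
    (hBdown : ∀ J ∈ B, ∀ J' : Finset α, J' ⊆ J → J' ∈ B) (hB0 : ∅ ∈ B) :
    IsCSSOn (insert infty I) (blowup infty H B) := by
  refine ⟨?_, ?_, ?_⟩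
  · rintro J (hJ | ⟨J₀, hJ₀, rfl⟩)
    · exact (hH.1 J hJ).trans (Finset.subset_insert _ _)
    · exact Finset.insert_subset_insert _ (hH.1 J₀ (hBH hJ₀))
  · rintro J (hJ | ⟨J₀, hJ₀, rfl⟩) J' hJ'
    · exact Or.inl (hH.2.1 J hJ J' hJ')
    · by_cases hmem : infty ∈ J'
      · exact Or.inr ⟨J'.erase infty, hBdown J₀ hJ₀ _ (Finset.subset_insert_iff.1 hJ'),
          (Finset.insert_erase hmem).symm⟩
      · exact Or.inl (hBH (hBdown J₀ hJ₀ J' ((Finset.subset_insert_iff_of_notMem hmem).1 hJ')))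
  · intro i hi
    rcases Finset.mem_insert.1 hi with rfl | hi
    · exact Or.inr ⟨∅, hB0, by simp⟩
    · exact Or.inl (hH.2.2 i hi)

end Blowup

theorem blowup_empty_center_simplyConnected_general
    {α : Type*} [DecidableEq α] (I : Finset α) (infty : α)
    (hinfty : infty ∉ I) (H : Set (Finset α)) (hH : IsCSSOn I H)
    (hsc : SimplyConnected H)
    (B : Set (Finset α)) (hBH : B ⊆ H)
    (hBdown : ∀ J ∈ B, ∀ J' : Finset α, J' ⊆ J → J' ∈ B)
    (hBne : (B ∩ level H 1).Nonempty)
    (hBconn : KConnectedIn B 1 (B ∩ level H 1)) :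
    IsCSSOn (insert infty I)
        (H ∪ {K : Finset α | ∃ J ∈ B, K = insert infty J}) ∧
      SimplyConnected (H ∪ {K : Finset α | ∃ J ∈ B, K = insert infty J}) := by
  have hni : ∀ J ∈ H, infty ∉ J := fun J hJ h => hinfty (hH.1 J hJ h)
  have hB0 : ∅ ∈ B := hBne.elim fun c hc => hBdown c hc.1 ∅ (Finset.empty_subset c)
  exact ⟨isCSSOn_blowup hinfty hH hBH hBdown hB0,
    simplyConnected_blowup hni hBH hB0 hBne hBconn hsc⟩

/-- (Blow-up with empty `Z_Y`.) If `H = H_3` is simply connected,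
`∞ ∉ I`, and `B ⊆ H` is closed under subsets, has strata of at most 2 elements, meets
`H(1)`, and `B ∩ H(1)` is 1-connected in `B`, then `H' = H ∪ {J ∪ {∞} : J ∈ B}` is a
simply connected combinatorial strata structure with minimal set of indices `I ∪ {∞}`. -/
theorem blowup_empty_center_simplyConnected
    {α : Type*} [Fintype α] [DecidableEq α] (I : Finset α) (infty : α)
    (hinfty : infty ∉ I) (H : Set (Finset α)) (hH : IsCSSOn I H)
    (hsc : SimplyConnected H) (hH3 : H = H3 H)
    (B : Set (Finset α)) (hBH : B ⊆ H)
    (hBdown : ∀ J ∈ B, ∀ J' : Finset α, J' ⊆ J → J' ∈ B)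
    (hBcard : ∀ J ∈ B, J.card ≤ 2)
    (hBne : (B ∩ level H 1).Nonempty)
    (hBconn : KConnectedIn B 1 (B ∩ level H 1)) :
    IsCSSOn (insert infty I)
        (H ∪ {K : Finset α | ∃ J ∈ B, K = insert infty J}) ∧
      SimplyConnected (H ∪ {K : Finset α | ∃ J ∈ B, K = insert infty J}) :=
  blowup_empty_center_simplyConnected_general I infty hinfty H hH hsc B hBH hBdown hBne hBconn
end
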